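/- arXiv:2601.07482 — 2 statements merged into one kernel-verified Lean document; each statement's English description precedes it below -/
import Mathlib

section
/- For all natural numbers k ≥ 0 and m ≥ 1, every real number τ, and every real number β with 0 < β ≤ 1, the interval integral ∫_β^1 (1 - (1-t)^k)·(τ/t)·(1 - (1-β)^{m-1}) dt equals τ·Σ_{i=1}^{k} C(k,i)·(-1)^{i+1}·((1 - β^i)/i)·(1 - (1-β)^{m-1}). -/
/-! Up to constant factors the integrand is `(1 - (1 - t) ^ k) / t`, which by the binomial
theorem is the polynomial `∑ i ∈ [1, k], C(k, i) (-1) ^ (i + 1) t ^ (i - 1)` away from `t = 0`;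
integrating it term by term gives the sum. -/

open Finset MeasureTheory

lemma one_sub_one_sub_pow_eq_sum (k : ℕ) (t : ℝ) :
    1 - (1 - t) ^ k = ∑ i ∈ Icc 1 k, (k.choose i : ℝ) * (-1) ^ (i + 1) * t ^ i := by
  rw [sub_eq_add_neg (1 : ℝ) t, add_comm, add_pow, range_eq_Ico,
    sum_eq_sum_Ico_succ_bot k.add_one_pos, zero_add, Ico_add_one_right_eq_Icc, ← sub_sub]
  simp only [pow_zero, one_pow, mul_one, Nat.choose_zero_right, Nat.cast_one, sub_self,
    zero_sub, neg_pow t]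
  rw [← sum_neg_distrib]
  refine sum_congr rfl fun i _ => ?_
  ring

lemma one_sub_one_sub_pow_div_eq_sum (k : ℕ) {t : ℝ} (ht : t ≠ 0) :
    (1 - (1 - t) ^ k) / t = ∑ i ∈ Icc 1 k, (k.choose i : ℝ) * (-1) ^ (i + 1) * t ^ (i - 1) := by
  rw [one_sub_one_sub_pow_eq_sum, sum_div]
  refine sum_congr rfl fun i hi => ?_
  rw [pow_sub₀ t ht (mem_Icc.mp hi).1, pow_one, mul_div_assoc, div_eq_mul_inv]

-- Only the null set `{0}` (where `/ t` gives the junk value `0`) spoils the polynomial identity,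
-- so this holds for all `a, b`, even when `[a, b]` contains `0`.
lemma integral_one_sub_one_sub_pow_div (k : ℕ) (a b : ℝ) :
    ∫ t in a..b, (1 - (1 - t) ^ k) / t =
      ∑ i ∈ Icc 1 k, (k.choose i : ℝ) * (-1) ^ (i + 1) * ((b ^ i - a ^ i) / i) := by
  have hpoly : ∀ᵐ t : ℝ, t ∈ Set.uIoc a b → (1 - (1 - t) ^ k) / t =
      ∑ i ∈ Icc 1 k, (k.choose i : ℝ) * (-1) ^ (i + 1) * t ^ (i - 1) := by
    filter_upwards [Measure.ae_ne volume 0] with t ht _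
    exact one_sub_one_sub_pow_div_eq_sum k ht
  rw [intervalIntegral.integral_congr_ae hpoly,
    intervalIntegral.integral_finsetSum fun i _ =>
      (by fun_prop : Continuous _).intervalIntegrable _ _]
  refine sum_congr rfl fun i hi => ?_
  rw [intervalIntegral.integral_const_mul, integral_pow, ← Nat.cast_add_one,
    Nat.sub_add_cancel (mem_Icc.mp hi).1]

theorem stmt_7_general (k m : ℕ) (τ β : ℝ) :
    ∫ t in β..1, (1 - (1 - t) ^ k) * (τ / t) * (1 - (1 - β) ^ (m - 1)) =
      τ * ∑ i ∈ Finset.Icc 1 k,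
        (k.choose i : ℝ) * (-1) ^ (i + 1) * ((1 - β ^ i) / i) *
          (1 - (1 - β) ^ (m - 1)) := by
  set c : ℝ := 1 - (1 - β) ^ (m - 1)
  have hintegrand : (fun t : ℝ => (1 - (1 - t) ^ k) * (τ / t) * c) =
      fun t => (1 - (1 - t) ^ k) / t * (τ * c) := by
    funext t
    ring
  rw [hintegrand, intervalIntegral.integral_mul_const, integral_one_sub_one_sub_pow_div]
  simp only [one_pow, sum_mul, mul_sum]
  exact sum_congr rfl fun i _ => by ring

theorem stmt_7 (k m : ℕ) (hm : 1 ≤ m) (τ β : ℝ) (hβ : 0 < β) (hβ1 : β ≤ 1) :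
    ∫ t in β..1, (1 - (1 - t) ^ k) * (τ / t) * (1 - (1 - β) ^ (m - 1)) =
      τ * ∑ i ∈ Finset.Icc 1 k,
        (k.choose i : ℝ) * (-1) ^ (i + 1) * ((1 - β ^ i) / i) *
          (1 - (1 - β) ^ (m - 1)) :=
  stmt_7_general k m τ β
end

section
/- Fix natural numbers m ≥ 1, k ≥ 0, m₂ ≥ 0, a real number δ, and a real number τ with 0 < τ ≤ 1. Define for β ∈ (0,1] the function C₅(β) = τ·Σ_{i=1}^{m-1} C(m-1,i)·(-1)^{i+1}·(β^i - τ^i)/i + ((1-τ)^m - (1-β)^m)/m + τ·Σ_{i=1}^{k} C(k,i)·(-1)^{i+1}·((1-β^i)/i)·(1 - (1-β)^{m-1}) + ((1-β)^{k+1}/(k+1))·(1 - (1-β)^{m₂})·(1-δ)·(τ/β). Then ∫_τ^1 C₅(β) dβ ≥ τ·Σ_{i=1}^{m-1} C(m-1,i)·(-1)^{i+1}·( (1-τ^{i+1})/(i(i+1)) - τ^i·(1-τ)/i ) + (1-τ)^m·(1-τ)/m - (1-τ)^{m+1}/(m(m+1)) + τ·Σ_{i=1}^{k} C(k,i)·(-1)^{i+1}·(1/i)·[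 (1-τ) - (1-τ^{i+1})/(i+1) - (1-τ)^m/m + i!·(m-1)!/(i+m)! - ∫_0^τ β^i·(1-β)^{m-1} dβ ] + ((1-δ)·τ/(k+1))·[ Σ_{i=1}^{k+1} C(k+1,i)·(-1)^i·(1-τ^i)/i - Σ_{i=1}^{k+1+m₂} C(k+1+m₂,i)·(-1)^i·(1-τ^i)/i ]. -/
/-!
The inequality holds with equality: every term of `C₅` integrates in closed form. Besides
polynomial integrals, two facts are needed. The Beta integral
`∫₀¹ xⁱ (1 - x)ⁿ = i! n! / (i + n + 1)!` (from `Γ(s) Γ(t) = Γ(s + t) B(s, t)`) evaluates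
`∫_τ^1 βⁱ (1 - β)^(m-1)` as the Beta value minus `∫_0^τ`. And the singular-looking last term is
polynomial: `(1 - β)^(k+1) (1 - (1 - β)^m₂) / β` is the difference of the two polynomials
`((1 - β)^N - 1) / β = ∑_{i=1}^N C(N, i) (-1)^i β^(i-1)` for `N = k + 1` and `N = k + 1 + m₂`.
-/

open Finset intervalIntegral Nat
open MeasureTheory (volume ae_restrict_of_ae)

theorem integral_pow_mul_one_sub_pow (i n : ℕ) :
    ∫ x in (0:ℝ)..1, x ^ i * (1 - x) ^ n = (i ! * n ! / (i + n + 1)! : ℝ) := by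
  have hre : ∀ j : ℕ, 0 < ((j : ℂ) + 1).re := fun j => by simp; positivity
  have hΓ := Complex.Gamma_mul_Gamma_eq_betaIntegral (hre i) (hre n)
  rw [show (i : ℂ) + 1 + (n + 1) = ((i + n + 1 : ℕ) : ℂ) + 1 by push_cast; ring] at hΓ
  simp only [Complex.Gamma_nat_eq_factorial] at hΓ
  have hB := eq_div_of_mul_eq (by exact_mod_cast (i + n + 1).factorial_ne_zero)
    ((mul_comm _ _).trans hΓ.symm)
  have hpow : ∀ (j : ℕ) (y : ℂ), y ^ ((j : ℂ) + 1 - 1) = y ^ j := fun j y => by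
    rw [add_sub_cancel_right, Complex.cpow_natCast]
  simp only [Complex.betaIntegral, hpow] at hB
  have hreal : ∀ x : ℝ, (x : ℂ) ^ i * (1 - (x : ℂ)) ^ n = ((x ^ i * (1 - x) ^ n : ℝ) : ℂ) := by
    intro x; push_cast; rfl
  simp only [hreal, intervalIntegral.integral_ofReal] at hB
  exact Complex.ofReal_injective (by rw [hB]; push_cast; rfl)

theorem integral_one_sub_pow (n : ℕ) (a b : ℝ) :
    ∫ x in a..b, (1 - x) ^ n = ((1 - a) ^ (n + 1) - (1 - b) ^ (n + 1)) / (n + 1) := by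
  rw [integral_comp_sub_left (fun x : ℝ => x ^ n), integral_pow]

theorem one_sub_pow_sub_one_eq_sum (n : ℕ) (x : ℝ) :
    (1 - x) ^ n - 1 = x * ∑ j ∈ range n, (n.choose (j + 1) : ℝ) * (-1) ^ (j + 1) * x ^ j := by
  rw [sub_eq_neg_add 1 x, add_pow, sum_range_succ', mul_sum]
  simp only [pow_zero, one_pow, choose_zero_right, cast_one, mul_one, add_sub_cancel_right]
  refine sum_congr rfl fun j _ => ?_
  ring

/-- Only almost everywhere: at `x = 0` the left side is `0 / 0 = 0`. -/
theorem one_sub_pow_sub_one_div_ae_eq (n : ℕ) :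
    (fun x => ((1 - x) ^ n - 1) / x) =ᵐ[volume]
      fun x => ∑ j ∈ range n, (n.choose (j + 1) : ℝ) * (-1) ^ (j + 1) * x ^ j := by
  filter_upwards [volume.ae_ne 0] with x hx
  rw [one_sub_pow_sub_one_eq_sum, mul_div_cancel_left₀ _ hx]

theorem integral_one_sub_pow_sub_one_div (n : ℕ) (a b : ℝ) :
    ∫ x in a..b, ((1 - x) ^ n - 1) / x =
      ∑ i ∈ Icc 1 n, (n.choose i : ℝ) * (-1) ^ i * (b ^ i - a ^ i) / i := by
  rw [integral_congr_ae ((one_sub_pow_sub_one_div_ae_eq n).mono fun x hx _ => hx),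
    integral_finsetSum fun j _ => (Continuous.intervalIntegrable (by fun_prop) _ _),
    ← Ico_add_one_right_eq_Icc, sum_Ico_eq_sum_range, add_tsub_cancel_right]
  refine sum_congr rfl fun j _ => ?_
  rw [integral_const_mul, integral_pow, add_comm 1 j]
  push_cast
  ring

theorem intervalIntegrable_one_sub_pow_sub_one_div (n : ℕ) (a b : ℝ) :
    IntervalIntegrable (fun x => ((1 - x) ^ n - 1) / x) volume a b :=
  (intervalIntegrable_congr_ae (ae_restrict_of_ae (one_sub_pow_sub_one_div_ae_eq n))).mpr
    (Continuous.intervalIntegrable (by fun_prop) _ _)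

theorem integral_one_sub_pow_mul_one_sub_one_sub_pow (i n : ℕ) (a : ℝ) :
    ∫ x in a..1, (1 - x ^ i) * (1 - (1 - x) ^ n) =
      (1 - a) - (1 - a ^ (i + 1)) / (i + 1) - (1 - a) ^ (n + 1) / (n + 1)
        + i ! * n ! / (i + n + 1)! - ∫ x in (0:ℝ)..a, x ^ i * (1 - x) ^ n := by
  have hsplit : ∀ x : ℝ, (1 - x ^ i) * (1 - (1 - x) ^ n) =
      (1 - x ^ i - (1 - x) ^ n) + x ^ i * (1 - x) ^ n := fun x => by ring
  have hbeta : ∫ x in a..1, x ^ i * (1 - x) ^ n =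
      i ! * n ! / (i + n + 1)! - ∫ x in (0:ℝ)..a, x ^ i * (1 - x) ^ n := by
    rw [← integral_pow_mul_one_sub_pow, integral_interval_sub_left
      (Continuous.intervalIntegrable (by fun_prop) _ _)
      (Continuous.intervalIntegrable (by fun_prop) _ _)]
  simp only [hsplit]
  rw [integral_add (Continuous.intervalIntegrable (by fun_prop) _ _)
      (Continuous.intervalIntegrable (by fun_prop) _ _),
    integral_sub (Continuous.intervalIntegrable (by fun_prop) _ _)
      (Continuous.intervalIntegrable (by fun_prop) _ _),
    integral_sub intervalIntegrable_const (Continuous.intervalIntegrable (by fun_prop) _ _),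
    integral_const, integral_pow, integral_one_sub_pow, hbeta, smul_eq_mul, one_pow, sub_self,
    zero_pow (succ_ne_zero n)]
  ring

theorem integral_sum_choose_mul_pow_sub_pow (n : ℕ) (a : ℝ) :
    ∫ x in a..1, ∑ i ∈ Icc 1 n, (n.choose i : ℝ) * (-1) ^ (i + 1) * (x ^ i - a ^ i) / i =
      ∑ i ∈ Icc 1 n, (n.choose i : ℝ) * (-1) ^ (i + 1) *
        ((1 - a ^ (i + 1)) / (i * (i + 1)) - a ^ i * (1 - a) / i) := by
  rw [integral_finsetSum fun i _ => (Continuous.intervalIntegrable (by fun_prop) _ _)]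
  refine sum_congr rfl fun i _ => ?_
  rw [integral_div, integral_const_mul,
    integral_sub (Continuous.intervalIntegrable (by fun_prop) _ _) intervalIntegrable_const,
    integral_pow, integral_const, smul_eq_mul, one_pow]
  field_simp

theorem integral_one_sub_pow_sub_one_sub_pow_div (m : ℕ) (a : ℝ) :
    ∫ x in a..1, ((1 - a) ^ m - (1 - x) ^ m) / m =
      (1 - a) ^ m * (1 - a) / m - (1 - a) ^ (m + 1) / (m * (m + 1)) := by
  rw [integral_div, integral_sub intervalIntegrable_const
      (Continuous.intervalIntegrable (by fun_prop) _ _),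
    integral_const, integral_one_sub_pow, smul_eq_mul, sub_self, zero_pow (succ_ne_zero m),
    ← div_div]
  ring

theorem integral_sum_choose_mul_one_sub_pow_mul (k m : ℕ) (hm : 1 ≤ m) (a : ℝ) :
    ∫ x in a..1, ∑ i ∈ Icc 1 k,
        (k.choose i : ℝ) * (-1) ^ (i + 1) * ((1 - x ^ i) / i) * (1 - (1 - x) ^ (m - 1)) =
      ∑ i ∈ Icc 1 k, (k.choose i : ℝ) * (-1) ^ (i + 1) * (1 / i) *
        ((1 - a) - (1 - a ^ (i + 1)) / (i + 1) - (1 - a) ^ m / m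
          + i ! * (m - 1)! / (i + m)! - ∫ x in (0:ℝ)..a, x ^ i * (1 - x) ^ (m - 1)) := by
  obtain ⟨n, rfl⟩ : ∃ n, m = n + 1 := ⟨m - 1, by omega⟩
  rw [integral_finsetSum fun i _ => (Continuous.intervalIntegrable (by fun_prop) _ _)]
  refine sum_congr rfl fun i _ => ?_
  have hfactor : ∀ x : ℝ, (k.choose i : ℝ) * (-1) ^ (i + 1) * ((1 - x ^ i) / i) *
      (1 - (1 - x) ^ (n + 1 - 1)) =
      (k.choose i : ℝ) * (-1) ^ (i + 1) * (1 / i) * ((1 - x ^ i) * (1 - (1 - x) ^ n)) :=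
    fun x => by rw [add_tsub_cancel_right]; ring
  simp only [hfactor]
  rw [integral_const_mul, integral_one_sub_pow_mul_one_sub_one_sub_pow, add_tsub_cancel_right,
    ← add_assoc, cast_add, cast_one]

theorem stmt_12_general (m k m₂ : ℕ) (hm : 1 ≤ m) (δ τ : ℝ) :
    ∫ β in τ..1,
        (τ * (∑ i ∈ Finset.Icc 1 (m - 1),
            ((m - 1).choose i : ℝ) * (-1) ^ (i + 1) * (β ^ i - τ ^ i) / i)
          + ((1 - τ) ^ m - (1 - β) ^ m) / m
          + τ * (∑ i ∈ Finset.Icc 1 k,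
            (k.choose i : ℝ) * (-1) ^ (i + 1) * ((1 - β ^ i) / i) *
              (1 - (1 - β) ^ (m - 1)))
          + ((1 - β) ^ (k + 1) / (k + 1)) * (1 - (1 - β) ^ m₂) * (1 - δ) * (τ / β)) ≥
      τ * (∑ i ∈ Finset.Icc 1 (m - 1),
          ((m - 1).choose i : ℝ) * (-1) ^ (i + 1) *
            ((1 - τ ^ (i + 1)) / (i * (i + 1)) - τ ^ i * (1 - τ) / i))
        + (1 - τ) ^ m * (1 - τ) / m - (1 - τ) ^ (m + 1) / (m * (m + 1))
        + τ * (∑ i ∈ Finset.Icc 1 k,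
          (k.choose i : ℝ) * (-1) ^ (i + 1) * (1 / i) *
            ((1 - τ) - (1 - τ ^ (i + 1)) / (i + 1) - (1 - τ) ^ m / m
              + ((Nat.factorial i : ℝ) * (Nat.factorial (m - 1)) /
                  (Nat.factorial (i + m)))
              - ∫ β in (0:ℝ)..τ, β ^ i * (1 - β) ^ (m - 1)))
        + ((1 - δ) * τ / (k + 1)) *
          ((∑ i ∈ Finset.Icc 1 (k + 1),
              ((k + 1).choose i : ℝ) * (-1) ^ i * (1 - τ ^ i) / i)
            - (∑ i ∈ Finset.Icc 1 (k + 1 + m₂),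
              ((k + 1 + m₂).choose i : ℝ) * (-1) ^ i * (1 - τ ^ i) / i)) := by
  have htail : ∀ β : ℝ, ((1 - β) ^ (k + 1) / (k + 1)) * (1 - (1 - β) ^ m₂) * (1 - δ) * (τ / β) =
      (1 - δ) * τ / (k + 1) *
        (((1 - β) ^ (k + 1) - 1) / β - ((1 - β) ^ (k + 1 + m₂) - 1) / β) :=
    fun β => by ring
  simp only [htail]
  refine ge_of_eq ?_
  rw [integral_add (Continuous.intervalIntegrable (by fun_prop) _ _)
      (((intervalIntegrable_one_sub_pow_sub_one_div _ _ _).sub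
        (intervalIntegrable_one_sub_pow_sub_one_div _ _ _)).const_mul _),
    integral_add (Continuous.intervalIntegrable (by fun_prop) _ _)
      (Continuous.intervalIntegrable (by fun_prop) _ _),
    integral_add (Continuous.intervalIntegrable (by fun_prop) _ _)
      (Continuous.intervalIntegrable (by fun_prop) _ _),
    integral_const_mul, integral_const_mul, integral_const_mul,
    integral_sub (intervalIntegrable_one_sub_pow_sub_one_div _ _ _)
      (intervalIntegrable_one_sub_pow_sub_one_div _ _ _),
    integral_sum_choose_mul_pow_sub_pow, integral_one_sub_pow_sub_one_sub_pow_div,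
    integral_sum_choose_mul_one_sub_pow_mul k m hm, integral_one_sub_pow_sub_one_div,
    integral_one_sub_pow_sub_one_div]
  simp only [one_pow]
  ring

theorem stmt_12 (m k m₂ : ℕ) (hm : 1 ≤ m) (δ τ : ℝ) (hτ : 0 < τ) (hτ1 : τ ≤ 1) :
    ∫ β in τ..1,
        (τ * (∑ i ∈ Finset.Icc 1 (m - 1),
            ((m - 1).choose i : ℝ) * (-1) ^ (i + 1) * (β ^ i - τ ^ i) / i)
          + ((1 - τ) ^ m - (1 - β) ^ m) / m
          + τ * (∑ i ∈ Finset.Icc 1 k,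
            (k.choose i : ℝ) * (-1) ^ (i + 1) * ((1 - β ^ i) / i) *
              (1 - (1 - β) ^ (m - 1)))
          + ((1 - β) ^ (k + 1) / (k + 1)) * (1 - (1 - β) ^ m₂) * (1 - δ) * (τ / β)) ≥
      τ * (∑ i ∈ Finset.Icc 1 (m - 1),
          ((m - 1).choose i : ℝ) * (-1) ^ (i + 1) *
            ((1 - τ ^ (i + 1)) / (i * (i + 1)) - τ ^ i * (1 - τ) / i))
        + (1 - τ) ^ m * (1 - τ) / m - (1 - τ) ^ (m + 1) / (m * (m + 1))
        + τ * (∑ i ∈ Finset.Icc 1 k,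
          (k.choose i : ℝ) * (-1) ^ (i + 1) * (1 / i) *
            ((1 - τ) - (1 - τ ^ (i + 1)) / (i + 1) - (1 - τ) ^ m / m
              + ((Nat.factorial i : ℝ) * (Nat.factorial (m - 1)) /
                  (Nat.factorial (i + m)))
              - ∫ β in (0:ℝ)..τ, β ^ i * (1 - β) ^ (m - 1)))
        + ((1 - δ) * τ / (k + 1)) *
          ((∑ i ∈ Finset.Icc 1 (k + 1),
              ((k + 1).choose i : ℝ) * (-1) ^ i * (1 - τ ^ i) / i)
            - (∑ i ∈ Finset.Icc 1 (k + 1 + m₂),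
              ((k + 1 + m₂).choose i : ℝ) * (-1) ^ i * (1 - τ ^ i) / i)) :=
  stmt_12_general m k m₂ hm δ τ
end
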